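/- There is a number M > 0 such that for any three mutually orthogonal planes H_1, H_2, H_3 in ℝ³, the set Γ = {(t, t², t³) : t ≥ M} intersects the union H_1 ∪ H_2 ∪ H_3 in at most 6 points. -/

import Mathlib

/-!
A plane `⟪x, u⟫ = c` meets the moment curve where the cubic `u₀ t + u₁ t² + u₂ t³ = c` vanishes,
so each of the three planes meets the curve at most three times. If a plane meets the tail
`t ≥ M` three times, Vieta's formulas force its normal to be a multiple of `(e₂, -e₁, 1)` with
`e₁, e₂ > 0`; two such normals have nonzero inner product, so at most one plane meets the tail
three times. If a plane meets the tail twice, the divided difference of its cubic shows that the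
last coordinate of its unit normal is at most `1 / M` in absolute value; since the normals form
an orthonormal basis, the squares of their last coordinates add up to `1`, so for `M = 2` some
plane meets the tail at most once. Hence at most `3 + 2 + 1 = 6` points.
-/

open scoped InnerProductSpace

/-- The moment curve in `ℝ³`: `γ(t) = (t, t², t³)`. -/
noncomputable def momentCurve3 : ℝ → EuclideanSpace ℝ (Fin 3) :=
  fun t => WithLp.toLp 2 (fun i : Fin 3 => t ^ ((i : ℕ) + 1))

lemma Orthonormal.sum_sq_apply_eq_one {ι : Type*} [Fintype ι] {u : ι → EuclideanSpace ℝ ι}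
    (hu : Orthonormal ℝ u) (j : ι) : ∑ i, u i j ^ 2 = 1 := by
  classical
  have : Nonempty ι := ⟨j⟩
  let b := (basisOfOrthonormalOfCardEqFinrank hu (by simp)).toOrthonormalBasis (by simpa)
  have h := b.sum_sq_inner_right (EuclideanSpace.single j 1)
  simpa [b, EuclideanSpace.inner_single_right] using h

lemma inner_momentCurve3 (t : ℝ) (u : EuclideanSpace ℝ (Fin 3)) :
    ⟪momentCurve3 t, u⟫_ℝ = u 0 * t + u 1 * t ^ 2 + u 2 * t ^ 3 := by
  simp [momentCurve3, PiLp.inner_apply, Fin.sum_univ_three]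

lemma momentCurve3_injective : Function.Injective momentCurve3 := by
  intro s t h
  simpa [momentCurve3] using congrArg (· 0) h

def tailPlaneParams (M : ℝ) (u : EuclideanSpace ℝ (Fin 3)) (c : ℝ) : Set ℝ :=
  {t | M ≤ t ∧ ⟪momentCurve3 t, u⟫_ℝ = c}

lemma momentCurve3_image_Ici_inter_iUnion {ι : Type*} (M : ℝ)
    (u : ι → EuclideanSpace ℝ (Fin 3)) (c : ι → ℝ) :
    momentCurve3 '' Set.Ici M ∩ ⋃ i, {x | ⟪x, u i⟫_ℝ = c i} =
      momentCurve3 '' ⋃ i, tailPlaneParams M (u i) (c i) := by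
  rw [← Set.image_inter_preimage, Set.preimage_iUnion, Set.inter_iUnion]
  rfl

lemma Set.exists_three_of_two_lt_encard {α : Type*} {s : Set α} (h : 2 < s.encard) :
    ∃ a ∈ s, ∃ b ∈ s, ∃ c ∈ s, a ≠ b ∧ a ≠ c ∧ b ≠ c := by
  obtain ⟨t, hts, ht⟩ := Set.exists_subset_encard_eq (Order.add_one_le_of_lt h)
  obtain ⟨a, b, c, hab, hac, hbc, rfl⟩ := Set.encard_eq_three.mp ht
  exact ⟨a, hts (by simp), b, hts (by simp), c, hts (by simp), hab, hac, hbc⟩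

open Polynomial in
lemma encard_tailPlaneParams_le_three (M : ℝ) {u : EuclideanSpace ℝ (Fin 3)} (hu : u ≠ 0)
    (c : ℝ) : (tailPlaneParams M u c).encard ≤ 3 := by
  set p : ℝ[X] := C (u 2) * X ^ 3 + C (u 1) * X ^ 2 + C (u 0) * X - C c
  have hp : p ≠ 0 := by
    intro hp
    apply hu
    ext i
    fin_cases i
    · simpa [p] using congrArg (coeff · 1) hp
    · simpa [p] using congrArg (coeff · 2) hp
    · simpa [p] using congrArg (coeff · 3) hp
  have hsub : tailPlaneParams M u c ⊆ p.roots.toFinset := by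
    rintro t ⟨-, ht⟩
    rw [inner_momentCurve3] at ht
    rw [Finset.mem_coe, Multiset.mem_toFinset, mem_roots hp, IsRoot]
    simp only [p, eval_sub, eval_add, eval_mul, eval_C, eval_pow, eval_X, ← ht]
    ring
  calc (tailPlaneParams M u c).encard ≤ p.roots.toFinset.card :=
        (Set.encard_mono hsub).trans_eq (Set.encard_coe_eq_coe_finsetCard _)
    _ ≤ p.natDegree := by exact_mod_cast p.roots.toFinset_card_le.trans p.card_roots'
    _ ≤ 3 := by exact_mod_cast (show p.natDegree ≤ 3 by simp only [p]; compute_degree!)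

lemma cubic_divided_difference_eq_zero {a b c d x y : ℝ} (hxy : x ≠ y)
    (hx : a * x + b * x ^ 2 + c * x ^ 3 = d) (hy : a * y + b * y ^ 2 + c * y ^ 3 = d) :
    a + b * (x + y) + c * (x ^ 2 + x * y + y ^ 2) = 0 := by
  have h : (x - y) * (a + b * (x + y) + c * (x ^ 2 + x * y + y ^ 2)) = 0 := by
    linear_combination hx - hy
  exact (mul_eq_zero.mp h).resolve_left (sub_ne_zero.mpr hxy)

lemma cubic_coeffs_of_three_roots {a b c d x y z : ℝ} (hxy : x ≠ y) (hxz : x ≠ z)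
    (hyz : y ≠ z) (hx : a * x + b * x ^ 2 + c * x ^ 3 = d)
    (hy : a * y + b * y ^ 2 + c * y ^ 3 = d) (hz : a * z + b * z ^ 2 + c * z ^ 3 = d) :
    b = -c * (x + y + z) ∧ a = c * (x * y + x * z + y * z) := by
  have hxy' := cubic_divided_difference_eq_zero hxy hx hy
  have hxz' := cubic_divided_difference_eq_zero hxz hx hz
  have h : (y - z) * (b + c * (x + y + z)) = 0 := by linear_combination hxy' - hxz'
  have hb := (mul_eq_zero.mp h).resolve_left (sub_ne_zero.mpr hyz)
  exact ⟨by linear_combination hb, by linear_combination hxy' - (x + y) * hb⟩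

lemma exists_normal_eq_of_two_lt_encard {M : ℝ} (hM : 0 < M) {u : EuclideanSpace ℝ (Fin 3)}
    (hu : u ≠ 0) {c : ℝ} (h : 2 < (tailPlaneParams M u c).encard) :
    u 2 ≠ 0 ∧ ∃ e₁ > 0, ∃ e₂ > 0, u 1 = -u 2 * e₁ ∧ u 0 = u 2 * e₂ := by
  obtain ⟨x, ⟨hxM, hx⟩, y, ⟨hyM, hy⟩, z, ⟨hzM, hz⟩, hxy, hxz, hyz⟩ :=
    Set.exists_three_of_two_lt_encard h
  rw [inner_momentCurve3] at hx hy hz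
  obtain ⟨h1, h0⟩ := cubic_coeffs_of_three_roots hxy hxz hyz hx hy hz
  have hx0 : 0 < x := hM.trans_le hxM
  have hy0 : 0 < y := hM.trans_le hyM
  have hz0 : 0 < z := hM.trans_le hzM
  refine ⟨fun h2 => hu ?_, x + y + z, by positivity, x * y + x * z + y * z, by positivity, h1, h0⟩
  ext i
  fin_cases i <;> simp [h0, h1, h2]

lemma inner_ne_zero_of_two_lt_encard {M : ℝ} (hM : 0 < M) {u v : EuclideanSpace ℝ (Fin 3)}
    (hu : u ≠ 0) (hv : v ≠ 0) {c d : ℝ} (hu3 : 2 < (tailPlaneParams M u c).encard)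
    (hv3 : 2 < (tailPlaneParams M v d).encard) : ⟪u, v⟫_ℝ ≠ 0 := by
  obtain ⟨hu2, e₁, he₁, e₂, he₂, hu1, hu0⟩ := exists_normal_eq_of_two_lt_encard hM hu hu3
  obtain ⟨hv2, f₁, hf₁, f₂, hf₂, hv1, hv0⟩ := exists_normal_eq_of_two_lt_encard hM hv hv3
  have : ⟪u, v⟫_ℝ = u 2 * v 2 * (e₂ * f₂ + e₁ * f₁ + 1) := by
    simp only [PiLp.inner_apply, Fin.sum_univ_three, RCLike.inner_apply, conj_trivial,
      hu1, hu0, hv1, hv0]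
    ring
  rw [this]
  exact mul_ne_zero (mul_ne_zero hu2 hv2) (by positivity)

lemma abs_apply_two_le_inv_of_one_lt_encard {M : ℝ} (hM : 1 ≤ M) {v : EuclideanSpace ℝ (Fin 3)}
    (hv : ‖v‖ = 1) {c : ℝ} (h : 1 < (tailPlaneParams M v c).encard) : |v 2| ≤ M⁻¹ := by
  obtain ⟨x, y, ⟨hxM, hx⟩, ⟨hyM, hy⟩, hxy⟩ := Set.one_lt_encard_iff.mp h
  rw [inner_momentCurve3] at hx hy
  have hdd := cubic_divided_difference_eq_zero hxy hx hy
  have hcoord (i : Fin 3) : |v i| ≤ 1 := by simpa [hv] using PiLp.norm_apply_le v i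
  have hS : 0 < x + y := by linarith
  have hQ : M * (1 + (x + y)) ≤ x ^ 2 + x * y + y ^ 2 := by nlinarith
  have hbound : |v 2| * (x ^ 2 + x * y + y ^ 2) ≤ 1 + (x + y) :=
    calc |v 2| * (x ^ 2 + x * y + y ^ 2) = |v 0 + v 1 * (x + y)| := by
          rw [← abs_of_pos (by nlinarith : 0 < x ^ 2 + x * y + y ^ 2), ← abs_mul, ← abs_neg]
          congr 1
          linear_combination -hdd
      _ ≤ |v 0| + |v 1| * (x + y) := (abs_add_le _ _).trans_eq (by rw [abs_mul, abs_of_pos hS])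
      _ ≤ 1 + (x + y) := by nlinarith [hcoord 0, hcoord 1]
  rw [← one_div, le_div_iff₀ (by linarith)]
  nlinarith [abs_nonneg (v 2)]

lemma not_forall_one_lt_encard {u : Fin 3 → EuclideanSpace ℝ (Fin 3)} (hu : Orthonormal ℝ u)
    (c : Fin 3 → ℝ) : ¬ ∀ i, 1 < (tailPlaneParams 2 (u i) (c i)).encard := by
  intro h
  have hsmall (i : Fin 3) : u i 2 ^ 2 ≤ 1 / 4 := by
    have := abs_apply_two_le_inv_of_one_lt_encard one_le_two (hu.1 i) (h i)
    rw [← sq_abs]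
    nlinarith [abs_nonneg (u i 2)]
  have hsum := hu.sum_sq_apply_eq_one 2
  rw [Fin.sum_univ_three] at hsum
  linarith [hsmall 0, hsmall 1, hsmall 2]

lemma sum_le_six_of_le_three {n : Fin 3 → ℕ∞} (h3 : ∀ i, n i ≤ 3) (hsmall : ∃ i, n i ≤ 1)
    (hbig : ∀ i j, i ≠ j → 2 < n i → n j ≤ 2) : ∑ i, n i ≤ 6 := by
  lift n to Fin 3 → ℕ using fun i => ne_top_of_le_ne_top (by decide) (h3 i)
  simp [Fin.forall_fin_succ, Fin.exists_fin_succ, Fin.sum_univ_three] at *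
  norm_cast at *
  omega

/-- There is `M > 0` such that for any three mutually orthogonal planes
`H_1, H_2, H_3` in `ℝ³`, the set `Γ = {(t, t², t³) : t ≥ M}` meets `H_1 ∪ H_2 ∪ H_3` in at
most 6 points. -/
theorem tail_meets_orthogonal_planes_in_at_most_six_points :
    ∃ M : ℝ, 0 < M ∧
      ∀ (u : Fin 3 → EuclideanSpace ℝ (Fin 3)) (c : Fin 3 → ℝ),
        (∀ i, ‖u i‖ = 1) → (∀ i j, i ≠ j → ⟪u i, u j⟫_ℝ = 0) →
        (momentCurve3 '' Set.Ici M ∩ ⋃ i, {x | ⟪x, u i⟫_ℝ = c i}).encard ≤ 6 := by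
  refine ⟨2, two_pos, fun u c hnorm horth => ?_⟩
  have hu : Orthonormal ℝ u := ⟨hnorm, fun i j hij => horth i j hij⟩
  rw [momentCurve3_image_Ici_inter_iUnion, momentCurve3_injective.encard_image]
  refine (Set.encard_iUnion_le_of_fintype _).trans (sum_le_six_of_le_three ?_ ?_ ?_)
  · exact fun i => encard_tailPlaneParams_le_three 2 (hu.ne_zero i) (c i)
  · simpa using not_forall_one_lt_encard hu c
  · exact fun i j hij hi => le_of_not_gt fun hj =>
      inner_ne_zero_of_two_lt_encard two_pos (hu.ne_zero i) (hu.ne_zero j) hi hj (horth i j hij)
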